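/- The pseudo-gradient of the two-party game is not monotone: with ‖Q_A‖ = ‖Q_B‖ = 1, cos(ρ_A) = cos(ρ_B) = 0.6, ‖Q‖ = 1.2, and F(x,y) = (∂f/∂x, ∂g/∂y) as defined from the payoffs, the points z₁ = (0.49, 0.1) and z₂ = (0.1, 0.94) satisfy ⟨F(z₁) − F(z₂), z₁ − z₂⟩ > 0 (the 'wrong sign' for monotonicity of the ascent map; the game's pseudo-gradient F fails the monotonicity inequality ⟨F(u)−F(v), u−v⟩ ≤ 0). -/

import Mathlib

/-!
Since `√(1 - 0.6²) = 0.8`, the constants `K = -0.28` and `L = 0.96` are rational, and each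
component of `F` at `z₁` and `z₂` is a polynomial in `√(1 - 0.49²)`, `√(1 - 0.1²)`,
`√(1 - 0.94²)` once the denominators `√(1 - x²)` are rationalised. Enclosing these three roots in
short rational intervals pins the four values of `F` to within `0.01`, and then
`⟨F(z₁) - F(z₂), z₁ - z₂⟩ ≥ 0.84 · 0.05 > 0` (its true value is about `0.053`).
-/

namespace CounterexampleMonotone

/-- Constants: `C₁ = C₂ = 0.6`, `D₀ = ‖Q‖/8 = 0.15`. -/
noncomputable def C1 : ℝ := 0.6
noncomputable def C2 : ℝ := 0.6
noncomputable def D0 : ℝ := 0.15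

/-- `K = C₁C₂ − √(1−C₁²)√(1−C₂²)`. -/
noncomputable def K : ℝ := C1 * C2 - Real.sqrt (1 - C1^2) * Real.sqrt (1 - C2^2)

/-- `L = √(1−C₁²)C₂ + C₁√(1−C₂²)`. -/
noncomputable def L : ℝ := Real.sqrt (1 - C1^2) * C2 + C1 * Real.sqrt (1 - C2^2)

/-- `M(t) = Kt + L√(1−t²)`. -/
noncomputable def M (t : ℝ) : ℝ := K * t + L * Real.sqrt (1 - t^2)

/-- Winning probability. -/
noncomputable def pA (x y : ℝ) : ℝ :=
  1/2 + D0 * (C1 * x + Real.sqrt (1 - C1^2) * Real.sqrt (1 - x^2)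
    - C2 * y - Real.sqrt (1 - C2^2) * Real.sqrt (1 - y^2))

noncomputable def dpdx (x : ℝ) : ℝ :=
  D0 * (C1 - Real.sqrt (1 - C1^2) * x / Real.sqrt (1 - x^2))

noncomputable def dpdy (y : ℝ) : ℝ :=
  D0 * (-C2 + Real.sqrt (1 - C2^2) * y / Real.sqrt (1 - y^2))

/-- Pseudo-gradient component for party A (with `‖Q_A‖ = 1`). -/
noncomputable def F1 (x y : ℝ) : ℝ := pA x y + (x - M y) * dpdx x

/-- Pseudo-gradient component for party B (with `‖Q_B‖ = 1`). -/
noncomputable def F2 (x y : ℝ) : ℝ := (1 - pA x y) + (M x - y) * dpdy y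

open Real Set

lemma sqrt_one_sub_sq_of_sq_add_sq {a b : ℝ} (hb : 0 ≤ b) (h : a ^ 2 + b ^ 2 = 1) :
    √(1 - a ^ 2) = b := by
  rw [show 1 - a ^ 2 = b ^ 2 by linarith, sqrt_sq hb]

lemma sqrt_one_sub_C1_sq : √(1 - C1 ^ 2) = 0.8 :=
  sqrt_one_sub_sq_of_sq_add_sq (by norm_num) (by norm_num [C1])

lemma sqrt_one_sub_C2_sq : √(1 - C2 ^ 2) = 0.8 :=
  sqrt_one_sub_sq_of_sq_add_sq (by norm_num) (by norm_num [C2])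

lemma K_eq : K = -0.28 := by
  norm_num [K, sqrt_one_sub_C1_sq, sqrt_one_sub_C2_sq, C1, C2]

lemma L_eq : L = 0.96 := by
  norm_num [L, sqrt_one_sub_C1_sq, sqrt_one_sub_C2_sq, C1, C2]

lemma div_sqrt_eq_mul_sqrt_div (x v : ℝ) : x / √v = x * √v / v := by
  rcases le_or_gt v 0 with hv | hv
  · simp [sqrt_eq_zero'.2 hv]
  · have hs : √v ≠ 0 := (sqrt_pos.2 hv).ne'
    field_simp
    rw [sq_sqrt hv.le]

lemma M_eq (t : ℝ) : M t = -0.28 * t + 0.96 * √(1 - t ^ 2) := by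
  rw [M, K_eq, L_eq]

lemma pA_eq (x y : ℝ) :
    pA x y = 1 / 2 + 0.15 * (0.6 * x + 0.8 * √(1 - x ^ 2) - 0.6 * y - 0.8 * √(1 - y ^ 2)) := by
  rw [pA, sqrt_one_sub_C1_sq, sqrt_one_sub_C2_sq, C1, C2, D0]

lemma dpdx_eq (x : ℝ) : dpdx x = 0.15 * (0.6 - 0.8 * x * √(1 - x ^ 2) / (1 - x ^ 2)) := by
  rw [dpdx, sqrt_one_sub_C1_sq, div_sqrt_eq_mul_sqrt_div, C1, D0]

lemma dpdy_eq (y : ℝ) : dpdy y = 0.15 * (-0.6 + 0.8 * y * √(1 - y ^ 2) / (1 - y ^ 2)) := by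
  rw [dpdy, sqrt_one_sub_C2_sq, div_sqrt_eq_mul_sqrt_div, C2, D0]

lemma sqrt_mem_Ioo {v lo hi : ℝ} (hhi : 0 < hi) (hlo : lo ^ 2 < v) (hv : v < hi ^ 2) :
    √v ∈ Ioo lo hi :=
  ⟨lt_sqrt_of_sq_lt hlo, (sqrt_lt' hhi).2 hv⟩

lemma sqrt_one_sub_sq_049 : √(1 - 0.49 ^ 2) ∈ Ioo (0.87 : ℝ) 0.872 :=
  sqrt_mem_Ioo (by norm_num) (by norm_num) (by norm_num)

lemma sqrt_one_sub_sq_01 : √(1 - 0.1 ^ 2) ∈ Ioo (0.994 : ℝ) 0.995 :=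
  sqrt_mem_Ioo (by norm_num) (by norm_num) (by norm_num)

lemma sqrt_one_sub_sq_094 : √(1 - 0.94 ^ 2) ∈ Ioo (0.341 : ℝ) 0.3412 :=
  sqrt_mem_Ioo (by norm_num) (by norm_num) (by norm_num)

lemma F1_z1_mem : F1 0.49 0.1 ∈ Ioo (0.51 : ℝ) 0.52 := by
  obtain ⟨ha, ha'⟩ := sqrt_one_sub_sq_049
  obtain ⟨hb, hb'⟩ := sqrt_one_sub_sq_01
  rw [F1, pA_eq, M_eq, dpdx_eq]
  generalize √(1 - (0.49 : ℝ) ^ 2) = a at *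
  generalize √(1 - (0.1 : ℝ) ^ 2) = b at *
  constructor <;> norm_num <;> nlinarith

lemma F1_z2_mem : F1 0.1 0.94 ∈ Ioo (0.5 : ℝ) 0.51 := by
  obtain ⟨ha, ha'⟩ := sqrt_one_sub_sq_01
  obtain ⟨hb, hb'⟩ := sqrt_one_sub_sq_094
  rw [F1, pA_eq, M_eq, dpdx_eq]
  generalize √(1 - (0.1 : ℝ) ^ 2) = a at *
  generalize √(1 - (0.94 : ℝ) ^ 2) = b at *
  constructor <;> norm_num <;> nlinarith

lemma F2_z1_mem : F2 0.49 0.1 ∈ Ioo (0.43 : ℝ) 0.44 := by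
  obtain ⟨ha, ha'⟩ := sqrt_one_sub_sq_049
  obtain ⟨hb, hb'⟩ := sqrt_one_sub_sq_01
  rw [F2, pA_eq, M_eq, dpdy_eq]
  generalize √(1 - (0.49 : ℝ) ^ 2) = a at *
  generalize √(1 - (0.1 : ℝ) ^ 2) = b at *
  constructor <;> norm_num <;> nlinarith

lemma F2_z2_mem : F2 0.1 0.94 ∈ Ioo (0.49 : ℝ) 0.5 := by
  obtain ⟨ha, ha'⟩ := sqrt_one_sub_sq_01
  obtain ⟨hb, hb'⟩ := sqrt_one_sub_sq_094
  rw [F2, pA_eq, M_eq, dpdy_eq]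
  generalize √(1 - (0.1 : ℝ) ^ 2) = a at *
  generalize √(1 - (0.94 : ℝ) ^ 2) = b at *
  constructor <;> norm_num <;> nlinarith

/-- The pseudo-gradient is not monotone: at `z₁ = (0.49, 0.1)` and
`z₂ = (0.1, 0.94)`, `⟨F(z₁) − F(z₂), z₁ − z₂⟩ > 0`, violating the monotonicity
inequality `⟨F(u) − F(v), u − v⟩ ≤ 0` for the ascent map. -/
theorem pseudo_gradient_not_monotone :
    0 < (F1 0.49 0.1 - F1 0.1 0.94) * (0.49 - 0.1)
      + (F2 0.49 0.1 - F2 0.1 0.94) * (0.1 - 0.94) := by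
  obtain ⟨h₁, -⟩ := F1_z1_mem
  obtain ⟨-, h₂⟩ := F1_z2_mem
  obtain ⟨-, h₃⟩ := F2_z1_mem
  obtain ⟨h₄, -⟩ := F2_z2_mem
  norm_num
  linarith

end CounterexampleMonotone
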